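/- Let E be a finite-dimensional complex Hilbert space and let ψ₁, ψ₂ : D → B(E) be holomorphic functions with ‖ψ_j(z)‖ ≤ 1 for all z ∈ D and j = 1, 2, such that I − ψ_j(z) is invertible for every z ∈ D, and such that (I + ψ₁(z))(I − ψ₁(z))⁻¹ + (I + ψ₂(z))(I − ψ₂(z))⁻¹ = ((1 + z)/(1 − z))·I for all z ∈ D. Then there exist a self-adjoint operator A ∈ B(E) and a positive contraction B ∈ B(E) (0 ≤ B ≤ I) such that (I + ψ₁(z))(I − ψ₁(z))⁻¹ = i·A + ((1 + z)/(1 − z))·B and (I + ψ₂(z))(I − ψ₂(z))⁻¹ = −i·A + ((1 + z)/(1 − z))·(I − B) for all z ∈ D. -/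

import Mathlib

/-!
Put `F z = (1 + ψ₁ z)(1 - ψ₁ z)⁻¹`, `G z = (1 + ψ₂ z)(1 - ψ₂ z)⁻¹` and `L z = (1 + z) / (1 - z)`.
Both Cayley transforms have nonnegative real part and `F + G = L`, so for each vector `x` the
holomorphic function `f z = ⟪x, F z x⟫` satisfies `0 ≤ Re f ≤ ‖x‖² Re L`. Carathéodory's
inequality `‖f' z‖ (1 - ‖z‖²) ≤ 2 Re f z` is an equality for `L`, so applying it to `f` and to
`‖x‖² L - f` forces `f' = s L'` with `Re f = s Re L` and `s` real. The holomorphic real-valued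
function `f' / L'` is constant, hence `f = Re (f 0) • L + i Im (f 0)`, and polarization gives
`F z = i ℑ (F 0) + L z ℜ (F 0)`.
-/

open ContinuousLinearMap Metric Complex ComplexConjugate
open scoped InnerProductSpace ComplexStarModule

lemma re_one_add_div_one_sub (z : ℂ) :
    ((1 + z) / (1 - z)).re = (1 - ‖z‖ ^ 2) / ‖1 - z‖ ^ 2 := by
  rw [div_re, ← add_div, ← normSq_eq_norm_sq, ← normSq_eq_norm_sq]
  congr 1
  simp only [normSq_apply, add_re, one_re, add_im, one_im, sub_re, sub_im]
  ring

lemma one_sub_ne_zero_of_mem_ball {z : ℂ} (hz : z ∈ ball (0 : ℂ) 1) : 1 - z ≠ 0 := by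
  rw [sub_ne_zero]
  rintro rfl
  simp at hz

lemma re_one_add_div_one_sub_pos {z : ℂ} (hz : z ∈ ball (0 : ℂ) 1) :
    0 < ((1 + z) / (1 - z)).re := by
  have : 0 < ‖1 - z‖ := norm_pos_iff.mpr (one_sub_ne_zero_of_mem_ball hz)
  rw [mem_ball_zero_iff] at hz
  have : ‖z‖ ^ 2 < 1 := by nlinarith [norm_nonneg z]
  rw [re_one_add_div_one_sub]
  positivity

lemma hasDerivAt_one_add_div_one_sub {z : ℂ} (hz : 1 - z ≠ 0) :
    HasDerivAt (fun w => (1 + w) / (1 - w)) (2 / (1 - z) ^ 2) z := by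
  refine (((hasDerivAt_id' z).const_add 1).fun_div ((hasDerivAt_id' z).const_sub 1) hz)
    |>.congr_deriv ?_
  ring

lemma differentiableOn_one_add_div_one_sub :
    DifferentiableOn ℂ (fun w : ℂ => (1 + w) / (1 - w)) (ball 0 1) := fun _ hz =>
  (hasDerivAt_one_add_div_one_sub (one_sub_ne_zero_of_mem_ball hz)).differentiableAt
    |>.differentiableWithinAt

lemma norm_two_div_one_sub_sq_mul (z : ℂ) :
    ‖2 / (1 - z) ^ 2‖ * (1 - ‖z‖ ^ 2) = 2 * ((1 + z) / (1 - z)).re := by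
  rw [re_one_add_div_one_sub, norm_div, norm_pow, Complex.norm_two]
  ring

section Mobius

variable {a w : ℂ}

lemma one_add_conj_mul_ne_zero (ha : a ∈ ball (0 : ℂ) 1) (hw : w ∈ ball (0 : ℂ) 1) :
    1 + conj a * w ≠ 0 := by
  rw [mem_ball_zero_iff] at ha hw
  intro h
  have : ‖conj a * w‖ < 1 := by
    rw [norm_mul, RCLike.norm_conj]
    nlinarith [norm_nonneg a, norm_nonneg w]
  rw [eq_neg_of_add_eq_zero_right h] at this
  simp at this

lemma mobius_mem_ball (ha : a ∈ ball (0 : ℂ) 1) (hw : w ∈ ball (0 : ℂ) 1) :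
    (w + a) / (1 + conj a * w) ∈ ball (0 : ℂ) 1 := by
  have hden := norm_pos_iff.mpr (one_add_conj_mul_ne_zero ha hw)
  rw [mem_ball_zero_iff] at ha hw ⊢
  rw [norm_div, div_lt_one hden, ← sq_lt_sq₀ (norm_nonneg _) (norm_nonneg _),
    ← normSq_eq_norm_sq, ← normSq_eq_norm_sq]
  have key : normSq (1 + conj a * w) - normSq (w + a) = (1 - normSq a) * (1 - normSq w) := by
    simp only [normSq_apply, add_re, add_im, mul_re, mul_im, one_re, one_im, conj_re, conj_im]
    ring
  have ha' : normSq a < 1 := by rw [normSq_eq_norm_sq]; nlinarith [norm_nonneg a]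
  have hw' : normSq w < 1 := by rw [normSq_eq_norm_sq]; nlinarith [norm_nonneg w]
  nlinarith

lemma hasDerivAt_mobius_zero (a : ℂ) :
    HasDerivAt (fun w => (w + a) / (1 + conj a * w)) (1 - ‖a‖ ^ 2 : ℝ) 0 := by
  refine (((hasDerivAt_id' 0).add_const a).fun_div
    (((hasDerivAt_id' 0).const_mul (conj a)).const_add 1) (by simp)).congr_deriv ?_
  push_cast
  rw [← Complex.mul_conj']
  ring

lemma differentiableOn_mobius (ha : a ∈ ball (0 : ℂ) 1) :
    DifferentiableOn ℂ (fun w => (w + a) / (1 + conj a * w)) (ball 0 1) :=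
  (differentiableOn_id.add_const a).div
    ((differentiableOn_id.const_mul (conj a)).const_add 1)
    fun _ hw => one_add_conj_mul_ne_zero ha hw

end Mobius

lemma norm_sub_lt_norm_add_conj {u c : ℂ} (hu : 0 < u.re) (hc : 0 < c.re) :
    ‖u - c‖ < ‖u + conj c‖ := by
  rw [← sq_lt_sq₀ (norm_nonneg _) (norm_nonneg _), ← normSq_eq_norm_sq, ← normSq_eq_norm_sq]
  simp only [normSq_apply, sub_re, sub_im, add_re, add_im, conj_re, conj_im]
  nlinarith

/-- Carathéodory's inequality, via the Schwarz lemma applied to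
`(f - f 0) / (f + conj (f 0))`. -/
lemma norm_deriv_zero_le_two_mul_re {f : ℂ → ℂ} (hf : DifferentiableOn ℂ f (ball 0 1))
    (hpos : ∀ z ∈ ball (0 : ℂ) 1, 0 < (f z).re) : ‖deriv f 0‖ ≤ 2 * (f 0).re := by
  have h0 : (0 : ℂ) ∈ ball (0 : ℂ) 1 := mem_ball_self one_pos
  set c := f 0
  have hden : ∀ z ∈ ball (0 : ℂ) 1, f z + conj c ≠ 0 := fun z hz h => by
    have := norm_sub_lt_norm_add_conj (hpos z hz) (hpos 0 h0)
    rw [h, norm_zero] at this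
    exact (norm_nonneg _).not_gt this
  set φ := fun z => (f z - c) / (f z + conj c)
  have hmaps : Set.MapsTo φ (ball 0 1) (closedBall (φ 0) 1) := fun z hz => by
    simp only [φ, c, sub_self, zero_div, mem_closedBall_zero_iff, norm_div]
    exact (div_lt_one (norm_pos_iff.mpr (hden z hz))).mpr
      (norm_sub_lt_norm_add_conj (hpos z hz) (hpos 0 h0)) |>.le
  have hφ : HasDerivAt φ (deriv f 0 / (2 * c.re : ℝ)) 0 := by
    have hf0 := (hf.differentiableAt (isOpen_ball.mem_nhds h0)).hasDerivAt
    refine ((hf0.sub_const c).fun_div (hf0.add_const (conj c)) (hden 0 h0)).congr_deriv ?_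
    rw [← add_conj, sub_self, zero_mul, sub_zero, pow_two, ← div_div,
      mul_div_cancel_right₀ _ (hden 0 h0)]
  have := Complex.norm_deriv_le_div_of_mapsTo_ball
    ((hf.sub_const c).fun_div (hf.add_const _) hden) hmaps one_pos
  rw [hφ.deriv, norm_div, norm_real, Real.norm_of_nonneg (by linarith [hpos 0 h0]), div_one,
    div_le_one (by linarith [hpos 0 h0])] at this
  exact this

lemma norm_deriv_mul_le_two_mul_re {f : ℂ → ℂ} (hf : DifferentiableOn ℂ f (ball 0 1))
    (hpos : ∀ z ∈ ball (0 : ℂ) 1, 0 < (f z).re) {a : ℂ} (ha : a ∈ ball (0 : ℂ) 1) :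
    ‖deriv f a‖ * (1 - ‖a‖ ^ 2) ≤ 2 * (f a).re := by
  set m := fun w => (w + a) / (1 + conj a * w)
  have hm0 : m 0 = a := by simp [m]
  have hfa := (hf.differentiableAt (isOpen_ball.mem_nhds ha)).hasDerivAt
  have hcomp := (hm0 ▸ hfa).comp 0 (hasDerivAt_mobius_zero a)
  have := norm_deriv_zero_le_two_mul_re
    (hf.comp (differentiableOn_mobius ha) fun w hw => mobius_mem_ball ha hw)
    fun w hw => hpos _ (mobius_mem_ball ha hw)
  have hρ : 0 ≤ 1 - ‖a‖ ^ 2 := by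
    rw [mem_ball_zero_iff] at ha; nlinarith [norm_nonneg a]
  rw [hcomp.deriv, hm0, norm_mul, norm_real, Real.norm_of_nonneg hρ] at this
  simpa using this

/-- Adding Carathéodory's inequalities for `f` and `M * L - f` gives an equality, since
`‖L'(a)‖ (1 - ‖a‖²) = 2 Re L(a)` for `L z = (1 + z) / (1 - z)`; so both are equalities and
`f'(a)` lies on the ray of `L'(a)`. -/
lemma exists_deriv_eq_and_re_eq {f : ℂ → ℂ} {M : ℝ} (hf : DifferentiableOn ℂ f (ball 0 1))
    (hpos : ∀ z ∈ ball (0 : ℂ) 1, 0 < (f z).re)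
    (hlt : ∀ z ∈ ball (0 : ℂ) 1, (f z).re < M * ((1 + z) / (1 - z)).re)
    {a : ℂ} (ha : a ∈ ball (0 : ℂ) 1) :
    ∃ s : ℝ, deriv f a = s * (2 / (1 - a) ^ 2) ∧ (f a).re = s * ((1 + a) / (1 - a)).re := by
  set K := 2 / (1 - a) ^ 2
  set g := fun z => M * ((1 + z) / (1 - z)) - f z
  have hρ : 0 < 1 - ‖a‖ ^ 2 := by
    rw [mem_ball_zero_iff] at ha; nlinarith [norm_nonneg a]
  have hM : 0 ≤ M := by
    have := re_one_add_div_one_sub_pos ha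
    nlinarith [hpos a ha, hlt a ha]
  have hgre : ∀ z, (g z).re = M * ((1 + z) / (1 - z)).re - (f z).re := fun z => by
    simp [g]
  have hg : HasDerivAt g (M * K - deriv f a) a :=
    ((hasDerivAt_one_add_div_one_sub (one_sub_ne_zero_of_mem_ball ha)).const_mul _).sub
      (hf.differentiableAt (isOpen_ball.mem_nhds ha)).hasDerivAt
  have h₁ := norm_deriv_mul_le_two_mul_re hf hpos ha
  have hgd : DifferentiableOn ℂ g (ball 0 1) :=
    (differentiableOn_one_add_div_one_sub.const_mul _).sub hf
  have h₂ := norm_deriv_mul_le_two_mul_re hgd (fun z hz => by rw [hgre]; linarith [hlt z hz]) ha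
  rw [hg.deriv, hgre] at h₂
  have hMK : ‖(M : ℂ) * K‖ * (1 - ‖a‖ ^ 2) = 2 * M * ((1 + a) / (1 - a)).re := by
    rw [norm_mul, norm_real, Real.norm_of_nonneg hM, mul_assoc, norm_two_div_one_sub_sq_mul]
    ring
  have hadd : deriv f a + (M * K - deriv f a) = M * K := by ring
  have hray : SameRay ℝ (deriv f a) (M * K - deriv f a) := by
    have htri := norm_add_le (deriv f a) (M * K - deriv f a)
    rw [sameRay_iff_norm_add]
    rw [hadd] at htri ⊢
    exact le_antisymm htri (le_of_mul_le_mul_right (by linarith) hρ)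
  obtain ⟨r₁, r₂, hr₁, hr₂, hr, e₁, e₂⟩ := hray.exists_eq_smul_add
  rw [hadd] at e₁ e₂
  refine ⟨r₁ * M, by rw [e₁, real_smul]; push_cast; ring, ?_⟩
  rw [e₁, norm_smul, Real.norm_of_nonneg hr₁, mul_assoc, hMK] at h₁
  rw [e₂, norm_smul, Real.norm_of_nonneg hr₂, mul_assoc, hMK] at h₂
  obtain rfl : r₂ = 1 - r₁ := by linarith
  nlinarith

theorem eq_re_mul_add_im_mul_I_of_re_le {f : ℂ → ℂ} {M : ℝ}
    (hf : DifferentiableOn ℂ f (ball 0 1))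
    (hnonneg : ∀ z ∈ ball (0 : ℂ) 1, 0 ≤ (f z).re)
    (hle : ∀ z ∈ ball (0 : ℂ) 1, (f z).re ≤ M * ((1 + z) / (1 - z)).re) :
    ∀ z ∈ ball (0 : ℂ) 1, f z = (f 0).re * ((1 + z) / (1 - z)) + (f 0).im * I := by
  have h0 : (0 : ℂ) ∈ ball (0 : ℂ) 1 := mem_ball_self one_pos
  set L := fun z : ℂ => (1 + z) / (1 - z)
  -- shifting by `L` makes both real-part bounds strict
  set g := fun z => f z + L z
  have hg : DifferentiableOn ℂ g (ball 0 1) := hf.add differentiableOn_one_add_div_one_sub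
  choose! s hs using fun z (hz : z ∈ ball (0 : ℂ) 1) =>
    exists_deriv_eq_and_re_eq (M := M + 2) hg
      (fun w hw => by simp only [g, add_re]; linarith [hnonneg w hw, re_one_add_div_one_sub_pos hw])
      (fun w hw => by simp only [g, add_re]; linarith [hle w hw, re_one_add_div_one_sub_pos hw]) hz
  -- `s = g' / L'` is holomorphic and real, hence constant
  have hu : AnalyticOnNhd ℂ (fun z => deriv g z * ((1 - z) ^ 2 / 2)) (ball 0 1) :=
    (hg.analyticOnNhd isOpen_ball).deriv.mul
      (((analyticOnNhd_const.sub analyticOnNhd_id).pow 2).div_const)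
  have hus : ∀ z ∈ ball (0 : ℂ) 1, deriv g z * ((1 - z) ^ 2 / 2) = s z := fun z hz => by
    have := one_sub_ne_zero_of_mem_ball hz
    rw [(hs z hz).1]
    field_simp
  obtain ⟨c, hc⟩ := hu.eq_const_of_im_eq_const (c₀ := 0)
    (fun z hz => by rw [hus z hz, ofReal_im]) isOpen_ball (isConnected_ball one_pos)
  have hs_const : ∀ z ∈ ball (0 : ℂ) 1, s z = s 0 := fun z hz => by
    exact_mod_cast (hus z hz).symm.trans ((hc z hz).trans ((hc 0 h0).symm.trans (hus 0 h0)))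
  -- so `g - s 0 * L` is holomorphic with zero real part
  obtain ⟨b, hb⟩ := ((hg.sub (differentiableOn_one_add_div_one_sub.const_mul (s 0 : ℂ)))
    |>.analyticOnNhd isOpen_ball).eq_re_add_const_mul_I_of_re_eq_const (c₀ := 0)
    (fun z hz => by
      simp only [Pi.sub_apply, sub_re, re_ofReal_mul, (hs z hz).2, hs_const z hz]; ring)
    isOpen_ball (isConnected_ball one_pos)
  simp only [Pi.sub_apply, g, ofReal_zero, zero_add] at hb
  have hb0 := hb 0 h0
  simp only [L, add_zero, sub_zero, div_one, mul_one] at hb0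
  obtain ⟨hre, him⟩ : (f 0).re + 1 - s 0 = 0 ∧ (f 0).im = b := by
    simpa [Complex.ext_iff] using hb0
  intro z hz
  rw [show (f 0).re = s 0 - 1 by linarith, him]
  push_cast
  linear_combination hb z hz

section Operator

variable {E : Type*} [NormedAddCommGroup E] [InnerProductSpace ℂ E]

/-- Writing `x = (1 - ψ) y`, the real part is `‖y‖² - ‖ψ y‖²`. -/
lemma re_inner_cayley_nonneg {ψ : E →L[ℂ] E} (hψ : ‖ψ‖ ≤ 1) (hinv : IsUnit (1 - ψ)) (x : E) :
    0 ≤ re ⟪x, ((1 + ψ) * Ring.inverse (1 - ψ)) x⟫_ℂ := by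
  obtain ⟨y, rfl⟩ : ∃ y, (1 - ψ) y = x :=
    ⟨Ring.inverse (1 - ψ) x, by rw [← mul_apply_eq_comp, Ring.mul_inverse_cancel _ hinv]; rfl⟩
  have hy : Ring.inverse (1 - ψ) ((1 - ψ) y) = y := by
    rw [← mul_apply_eq_comp, Ring.inverse_mul_cancel _ hinv]; rfl
  have hψy : ‖ψ y‖ ≤ ‖y‖ := (ψ.le_opNorm y).trans (mul_le_of_le_one_left (norm_nonneg y) hψ)
  rw [mul_apply_eq_comp, hy]
  have h₁ : (⟪y, y⟫_ℂ).re = ‖y‖ ^ 2 := inner_self_eq_norm_sq (𝕜 := ℂ) y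
  have h₂ : (⟪ψ y, ψ y⟫_ℂ).re = ‖ψ y‖ ^ 2 := inner_self_eq_norm_sq (𝕜 := ℂ) (ψ y)
  have h₃ : (⟪y, ψ y⟫_ℂ).re = (⟪ψ y, y⟫_ℂ).re := inner_re_symm (𝕜 := ℂ) y (ψ y)
  simp only [sub_apply, add_apply, one_apply_eq_self, inner_sub_left, inner_add_right, sub_re,
    add_re]
  nlinarith [norm_nonneg (ψ y)]

lemma eq_of_inner_apply_self_eq {S T : E →L[ℂ] E} (h : ∀ x, ⟪x, S x⟫_ℂ = ⟪x, T x⟫_ℂ) : S = T :=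
  ContinuousLinearMap.coe_injective <| (ext_inner_map _ _).mp fun x => by
    simp only [ContinuousLinearMap.coe_coe]
    rw [← inner_conj_symm, h, inner_conj_symm]

variable [CompleteSpace E]

lemma inner_realPart_apply (S : E →L[ℂ] E) (x : E) :
    ⟪x, (ℜ S : E →L[ℂ] E) x⟫_ℂ = re ⟪x, S x⟫_ℂ := by
  rw [realPart_apply_coe, smul_apply, ← coe_smul, inner_smul_right, add_apply, inner_add_right,
    star_eq_adjoint, adjoint_inner_right, ← inner_conj_symm (S x) x, re_eq_add_conj]
  push_cast
  ring

lemma inner_imaginaryPart_apply (S : E →L[ℂ] E) (x : E) :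
    ⟪x, (ℑ S : E →L[ℂ] E) x⟫_ℂ = im ⟪x, S x⟫_ℂ := by
  rw [imaginaryPart_apply_coe, smul_apply, smul_apply, ← coe_smul, inner_smul_right,
    inner_smul_right, sub_apply, inner_sub_right, star_eq_adjoint, adjoint_inner_right,
    ← inner_conj_symm (S x) x, im_eq_sub_conj]
  push_cast
  field_simp
  ring_nf
  rw [I_sq]
  ring

lemma isPositive_realPart_of_re_inner_nonneg {S : E →L[ℂ] E} (h : ∀ x, 0 ≤ re ⟪x, S x⟫_ℂ) :
    (ℜ S : E →L[ℂ] E).IsPositive := by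
  refine ⟨(ℜ S).2.isSymmetric, fun x => ?_⟩
  rw [ContinuousLinearMap.reApplyInnerSelf_apply, inner_re_symm, inner_realPart_apply]
  exact h x

theorem eq_I_smul_imaginaryPart_add_smul_realPart {F G : ℂ → E →L[ℂ] E}
    (hF : DifferentiableOn ℂ F (ball 0 1))
    (hFpos : ∀ z ∈ ball (0 : ℂ) 1, ∀ x, 0 ≤ re ⟪x, F z x⟫_ℂ)
    (hGpos : ∀ z ∈ ball (0 : ℂ) 1, ∀ x, 0 ≤ re ⟪x, G z x⟫_ℂ)
    (hsum : ∀ z ∈ ball (0 : ℂ) 1, F z + G z = ((1 + z) / (1 - z)) • (1 : E →L[ℂ] E)) :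
    ∀ z ∈ ball (0 : ℂ) 1,
      F z = I • (ℑ (F 0) : E →L[ℂ] E) + ((1 + z) / (1 - z)) • (ℜ (F 0) : E →L[ℂ] E) := by
  intro z hz
  refine eq_of_inner_apply_self_eq fun x => ?_
  have hre : ∀ w ∈ ball (0 : ℂ) 1,
      re ⟪x, F w x⟫_ℂ + re ⟪x, G w x⟫_ℂ = ‖x‖ ^ 2 * ((1 + w) / (1 - w)).re := fun w hw => by
    rw [← add_re, ← inner_add_right, ← add_apply, hsum w hw, smul_apply, one_apply_eq_self,
      inner_smul_right, inner_self_eq_norm_sq_to_K, mul_comm, ← RCLike.ofReal_pow]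
    exact RCLike.re_ofReal_mul (K := ℂ) _ _
  have hfd : DifferentiableOn ℂ (fun w => ⟪x, F w x⟫_ℂ) (ball 0 1) :=
    (innerSL ℂ x).differentiable.comp_differentiableOn (hF.clm_apply (differentiableOn_const x))
  have hfx := eq_re_mul_add_im_mul_I_of_re_le (M := ‖x‖ ^ 2) hfd
    (fun w hw => hFpos w hw x) (fun w hw => by linarith [hre w hw, hGpos w hw x]) z hz
  rw [add_apply, smul_apply, smul_apply,
    inner_add_right, inner_smul_right, inner_smul_right, inner_realPart_apply,
    inner_imaginaryPart_apply, hfx]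
  ring

end Operator

theorem stmt_11_general {E : Type*} [NormedAddCommGroup E] [InnerProductSpace ℂ E]
    [FiniteDimensional ℂ E]
    (ψ₁ ψ₂ : ℂ → E →L[ℂ] E)
    (hd₁ : ∀ z ∈ Metric.ball (0 : ℂ) 1, DifferentiableAt ℂ ψ₁ z)
    (hn₁ : ∀ z ∈ Metric.ball (0 : ℂ) 1, ‖ψ₁ z‖ ≤ 1)
    (hn₂ : ∀ z ∈ Metric.ball (0 : ℂ) 1, ‖ψ₂ z‖ ≤ 1)
    (hinv₁ : ∀ z ∈ Metric.ball (0 : ℂ) 1, IsUnit (1 - ψ₁ z))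
    (hinv₂ : ∀ z ∈ Metric.ball (0 : ℂ) 1, IsUnit (1 - ψ₂ z))
    (hsum : ∀ z ∈ Metric.ball (0 : ℂ) 1,
      (1 + ψ₁ z) * Ring.inverse (1 - ψ₁ z) + (1 + ψ₂ z) * Ring.inverse (1 - ψ₂ z)
        = ((1 + z) / (1 - z)) • (1 : E →L[ℂ] E)) :
    ∃ A B : E →L[ℂ] E,
      IsSelfAdjoint A ∧ B.IsPositive ∧ (1 - B).IsPositive ∧
      (∀ z ∈ Metric.ball (0 : ℂ) 1,
        (1 + ψ₁ z) * Ring.inverse (1 - ψ₁ z)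
          = Complex.I • A + ((1 + z) / (1 - z)) • B) ∧
      (∀ z ∈ Metric.ball (0 : ℂ) 1,
        (1 + ψ₂ z) * Ring.inverse (1 - ψ₂ z)
          = -(Complex.I • A) + ((1 + z) / (1 - z)) • (1 - B)) := by
  have h0 : (0 : ℂ) ∈ ball (0 : ℂ) 1 := mem_ball_self one_pos
  set F := fun z => (1 + ψ₁ z) * Ring.inverse (1 - ψ₁ z)
  set G := fun z => (1 + ψ₂ z) * Ring.inverse (1 - ψ₂ z)
  have hFG : ∀ z ∈ ball (0 : ℂ) 1, F z + G z = ((1 + z) / (1 - z)) • (1 : E →L[ℂ] E) := hsum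
  have hFpos z hz := re_inner_cayley_nonneg (hn₁ z hz) (hinv₁ z hz)
  have hGpos z hz := re_inner_cayley_nonneg (hn₂ z hz) (hinv₂ z hz)
  have hF : DifferentiableOn ℂ F (ball 0 1) := fun z hz => by
    have hinv : DifferentiableAt ℂ (fun w => Ring.inverse (1 - ψ₁ w)) z :=
      (differentiableAt_inverse (hinv₁ z hz)).comp (f := fun w => 1 - ψ₁ w) z
        ((differentiableAt_const 1).sub (hd₁ z hz))
    exact (((differentiableAt_const 1).add (hd₁ z hz)).mul hinv).differentiableWithinAt
  have hF_eq := eq_I_smul_imaginaryPart_add_smul_realPart hF hFpos hGpos hFG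
  have h1B : 1 - (ℜ (F 0) : E →L[ℂ] E) = ℜ (G 0) := by
    have hFG0 := hFG 0 h0
    simp only [add_zero, sub_zero, div_one, one_smul] at hFG0
    rw [eq_sub_of_add_eq' hFG0, map_sub, realPart_one]
    rfl
  refine ⟨ℑ (F 0), ℜ (F 0), (ℑ (F 0)).2, isPositive_realPart_of_re_inner_nonneg (hFpos 0 h0),
    h1B ▸ isPositive_realPart_of_re_inner_nonneg (hGpos 0 h0), hF_eq, fun z hz => ?_⟩
  change G z = _
  rw [eq_sub_of_add_eq' (hFG z hz), hF_eq z hz, smul_sub]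
  abel

set_option maxHeartbeats 1000000 in
/-- If `ψ₁, ψ₂ : D → B(E)` are holomorphic contraction-valued functions with `I - ψ_j(z)`
invertible whose Cayley transforms sum to `((1+z)/(1-z)) • I`, then there exist a
self-adjoint `A` and a positive contraction `B` (`0 ≤ B ≤ I`) with
`(I + ψ₁(z))(I - ψ₁(z))⁻¹ = i•A + ((1+z)/(1-z))•B` and
`(I + ψ₂(z))(I - ψ₂(z))⁻¹ = -i•A + ((1+z)/(1-z))•(I - B)` on the disc. -/
theorem stmt_11 {E : Type*} [NormedAddCommGroup E] [InnerProductSpace ℂ E]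
    [FiniteDimensional ℂ E]
    (ψ₁ ψ₂ : ℂ → E →L[ℂ] E)
    (hd₁ : ∀ z ∈ Metric.ball (0 : ℂ) 1, DifferentiableAt ℂ ψ₁ z)
    (hd₂ : ∀ z ∈ Metric.ball (0 : ℂ) 1, DifferentiableAt ℂ ψ₂ z)
    (hn₁ : ∀ z ∈ Metric.ball (0 : ℂ) 1, ‖ψ₁ z‖ ≤ 1)
    (hn₂ : ∀ z ∈ Metric.ball (0 : ℂ) 1, ‖ψ₂ z‖ ≤ 1)
    (hinv₁ : ∀ z ∈ Metric.ball (0 : ℂ) 1, IsUnit (1 - ψ₁ z))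
    (hinv₂ : ∀ z ∈ Metric.ball (0 : ℂ) 1, IsUnit (1 - ψ₂ z))
    (hsum : ∀ z ∈ Metric.ball (0 : ℂ) 1,
      (1 + ψ₁ z) * Ring.inverse (1 - ψ₁ z) + (1 + ψ₂ z) * Ring.inverse (1 - ψ₂ z)
        = ((1 + z) / (1 - z)) • (1 : E →L[ℂ] E)) :
    ∃ A B : E →L[ℂ] E,
      IsSelfAdjoint A ∧ B.IsPositive ∧ (1 - B).IsPositive ∧
      (∀ z ∈ Metric.ball (0 : ℂ) 1,
        (1 + ψ₁ z) * Ring.inverse (1 - ψ₁ z)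
          = Complex.I • A + ((1 + z) / (1 - z)) • B) ∧
      (∀ z ∈ Metric.ball (0 : ℂ) 1,
        (1 + ψ₂ z) * Ring.inverse (1 - ψ₂ z)
          = -(Complex.I • A) + ((1 + z) / (1 - z)) • (1 - B)) :=
  stmt_11_general ψ₁ ψ₂ hd₁ hn₁ hn₂ hinv₁ hinv₂ hsum
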